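/- Under Assumption 1, there exists c > 0 such that for every transition kernel q one has max_{s,s'∈S} (V^π_q(s) − V^π_q(s')) ≥ c; in particular, for every kernel q the value function V^π_q is not constant on S. -/

import Mathlib

open Finset

noncomputable section

/-- `p` is a transition kernel: `p(·|s,a)` is a probability vector on `S`. -/
def IsKernel {S A : Type*} [Fintype S] (p : S → A → S → ℝ) : Prop :=
  (∀ s a s', 0 ≤ p s a s') ∧ ∀ s a, ∑ s' : S, p s a s' = 1

/-- `π` is a policy: `π(·|s)` is a probability vector on `A`. -/
def IsPolicy {S A : Type*} [Fintype A] (π : S → A → ℝ) : Prop :=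
  (∀ s a, 0 ≤ π s a) ∧ ∀ s, ∑ a : A, π s a = 1

/-- The row-stochastic matrix `P_{p,π}(s,s') = Σ_a π(a|s) p(s'|s,a)`. -/
def Pmat {S A : Type*} [Fintype A] (π : S → A → ℝ) (p : S → A → S → ℝ) :
    Matrix S S ℝ :=
  fun s s' => ∑ a : A, π s a * p s a s'

/-- `r^π(s) = Σ_a π(a|s) r(s,a)`. -/
def rpi {S A : Type*} [Fintype A] (π : S → A → ℝ) (r : S → A → ℝ) (s : S) : ℝ :=
  ∑ a : A, π s a * r s a

/-- The value function `V^π_p(s) = Σ_t γ^t ((P_{p,π})^t r^π)(s)`. -/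
def Vval {S A : Type*} [Fintype S] [DecidableEq S] [Fintype A]
    (γ : ℝ) (π : S → A → ℝ) (r : S → A → ℝ) (p : S → A → S → ℝ) (s : S) : ℝ :=
  ∑' t : ℕ, γ ^ t * ((Pmat π p ^ t).mulVec (fun s' => rpi π r s')) s

/-- The Q-function `Q^π_p(s,a) = r(s,a) + γ Σ_{s'} p(s'|s,a) V^π_p(s')`. -/
def Qval {S A : Type*} [Fintype S] [DecidableEq S] [Fintype A]
    (γ : ℝ) (π : S → A → ℝ) (r : S → A → ℝ) (p : S → A → S → ℝ) (s : S) (a : A) : ℝ :=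
  r s a + γ * ∑ s' : S, p s a s' * Vval γ π r p s'

/-- The matrix `M_{p,π}((s,a),(s',a')) = p(s'|s,a) π(a'|s')` on `S × A`. -/
def Mmat {S A : Type*} (π : S → A → ℝ) (p : S → A → S → ℝ) :
    Matrix (S × A) (S × A) ℝ :=
  fun sa s'a' => p sa.1 sa.2 s'a'.1 * π s'a'.1 s'a'.2

/-- The discounted visitation distribution
`d^π_{p,s,a}(s',a') = (1−γ) Σ_t γ^t ((M_{p,π})^t)_{(s,a),(s',a')}`. -/
def dvis {S A : Type*} [Fintype S] [DecidableEq S] [Fintype A] [DecidableEq A]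
    (γ : ℝ) (π : S → A → ℝ) (p : S → A → S → ℝ) (x y : S × A) : ℝ :=
  (1 - γ) * ∑' t : ℕ, γ ^ t * (Mmat π p ^ t) x y

/-- `d^π_{p,ρ}(s,a) = Σ_{(s₀,a₀)} ρ_{s₀} π(a₀|s₀) d^π_{p,s₀,a₀}(s,a)`. -/
def drho {S A : Type*} [Fintype S] [DecidableEq S] [Fintype A] [DecidableEq A]
    (γ : ℝ) (π : S → A → ℝ) (p : S → A → S → ℝ) (ρ : S → ℝ) (y : S × A) : ℝ :=
  ∑ x : S × A, ρ x.1 * π x.1 x.2 * dvis γ π p x y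

/-- `KL_{sa}(p,q) = Σ_{s'} p(s'|s,a) log(p(s'|s,a)/q(s'|s,a))`
(with the convention `0 log 0 = 0`, automatic since `Real.log 0 = 0`). -/
def KLsa {S A : Type*} [Fintype S] (p q : S → A → S → ℝ) (s : S) (a : A) : ℝ :=
  ∑ s' : S, p s a s' * Real.log (p s a s' / q s a s')

end

/-!
Write `V` for `V^π_q` and `P` for `P_{q,π}`. The Bellman equation `V = r^π + γ P V` holds and `P`
is row stochastic, so `P V` takes values in `[min V, max V]`. Evaluating the equation at two states
`s₁`, `s₀` gives `r^π(s₁) - r^π(s₀) ≤ (1 + γ) (max V - min V)`, whose left side does not depend on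
`q`. Assumption 1 forces `min r^π < max r^π`, so `s₁`, `s₀` can be chosen to make it positive.
-/

open Finset Matrix

section DiscountedSeries

variable {S : Type*} [Fintype S] [DecidableEq S] {P : Matrix S S ℝ} {γ : ℝ}

lemma abs_mulVec_le_sum_abs (hP : P ∈ rowStochastic ℝ S) (v : S → ℝ) (s : S) :
    |(P *ᵥ v) s| ≤ ∑ s', |v s'| :=
  calc |(P *ᵥ v) s| ≤ ∑ s', |P s s' * v s'| := abs_sum_le_sum_abs _ _
    _ ≤ ∑ s', |v s'| := sum_le_sum fun s' _ => by
        rw [abs_mul, abs_of_nonneg (nonneg_of_mem_rowStochastic hP)]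
        exact mul_le_of_le_one_left (abs_nonneg _) (le_one_of_mem_rowStochastic hP)

lemma summable_discounted_mulVec (hP : P ∈ rowStochastic ℝ S) (hγ0 : 0 ≤ γ) (hγ1 : γ < 1)
    (v : S → ℝ) (s : S) : Summable fun t : ℕ => γ ^ t * (P ^ t *ᵥ v) s :=
  .of_norm_bounded ((summable_geometric_of_lt_one hγ0 hγ1).mul_right (∑ s', |v s'|)) fun t => by
    rw [Real.norm_eq_abs, abs_mul, abs_of_nonneg (pow_nonneg hγ0 t)]
    exact mul_le_mul_of_nonneg_left (abs_mulVec_le_sum_abs (pow_mem hP t) v s) (pow_nonneg hγ0 t)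

lemma tsum_discounted_mulVec_eq (hP : P ∈ rowStochastic ℝ S) (hγ0 : 0 ≤ γ) (hγ1 : γ < 1)
    (v : S → ℝ) (s : S) :
    ∑' t : ℕ, γ ^ t * (P ^ t *ᵥ v) s
      = v s + γ * (P *ᵥ fun s' => ∑' t : ℕ, γ ^ t * (P ^ t *ᵥ v) s') s := by
  have hsum := summable_discounted_mulVec hP hγ0 hγ1 v
  have hshift : ∀ t : ℕ, γ ^ (t + 1) * (P ^ (t + 1) *ᵥ v) s
      = ∑ s', γ * (P s s' * (γ ^ t * (P ^ t *ᵥ v) s')) := fun t => by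
    rw [pow_succ' P, ← mulVec_mulVec, mulVec, dotProduct, mul_sum]
    exact sum_congr rfl fun s' _ => by ring
  rw [(hsum s).tsum_eq_zero_add, tsum_congr hshift,
    Summable.tsum_finsetSum fun s' _ => ((hsum s').mul_left _).mul_left _,
    pow_zero, pow_zero, one_mul, one_mulVec, mulVec, dotProduct, mul_sum]
  exact congrArg (v s + ·) (sum_congr rfl fun s' _ => by rw [tsum_mul_left, tsum_mul_left])

lemma mulVec_le_of_forall_le (hP : P ∈ rowStochastic ℝ S) {V : S → ℝ} {c : ℝ}
    (hV : ∀ s, V s ≤ c) (s : S) : (P *ᵥ V) s ≤ c :=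
  calc (P *ᵥ V) s ≤ ∑ s', P s s' * c :=
        sum_le_sum fun s' _ => mul_le_mul_of_nonneg_left (hV s') (nonneg_of_mem_rowStochastic hP)
    _ = c := by rw [← sum_mul, sum_row_of_mem_rowStochastic hP, one_mul]

lemma le_mulVec_of_forall_le (hP : P ∈ rowStochastic ℝ S) {V : S → ℝ} {c : ℝ}
    (hV : ∀ s, c ≤ V s) (s : S) : c ≤ (P *ᵥ V) s :=
  calc c = ∑ s', P s s' * c := by rw [← sum_mul, sum_row_of_mem_rowStochastic hP, one_mul]
    _ ≤ (P *ᵥ V) s :=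
        sum_le_sum fun s' _ => mul_le_mul_of_nonneg_left (hV s') (nonneg_of_mem_rowStochastic hP)

lemma sub_le_one_add_mul_sub_of_bellman (hP : P ∈ rowStochastic ℝ S) (hγ0 : 0 ≤ γ)
    {v V : S → ℝ} (hV : ∀ s, V s = v s + γ * (P *ᵥ V) s) {sMax sMin : S}
    (hMax : ∀ s, V s ≤ V sMax) (hMin : ∀ s, V sMin ≤ V s) (s₁ s₀ : S) :
    v s₁ - v s₀ ≤ (1 + γ) * (V sMax - V sMin) := by
  have h₁ : γ * V sMin ≤ γ * (P *ᵥ V) s₁ :=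
    mul_le_mul_of_nonneg_left (le_mulVec_of_forall_le hP hMin s₁) hγ0
  have h₀ : γ * (P *ᵥ V) s₀ ≤ γ * V sMax :=
    mul_le_mul_of_nonneg_left (mulVec_le_of_forall_le hP hMax s₀) hγ0
  linarith [hV s₁, hV s₀, hMax s₁, hMin s₀]

end DiscountedSeries

lemma Pmat_mem_rowStochastic {S A : Type*} [Fintype S] [DecidableEq S] [Fintype A]
    {π : S → A → ℝ} {p : S → A → S → ℝ} (hπ : IsPolicy π) (hp : IsKernel p) :
    Pmat π p ∈ rowStochastic ℝ S := by
  refine mem_rowStochastic_iff_sum.2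
    ⟨fun s s' => sum_nonneg fun a _ => mul_nonneg (hπ.1 s a) (hp.1 s a s'), fun s => ?_⟩
  simp only [Pmat]
  rw [sum_comm]
  simp only [← mul_sum, hp.2, mul_one, hπ.2]

lemma Vval_eq_rpi_add {S A : Type*} [Fintype S] [DecidableEq S] [Fintype A]
    {γ : ℝ} (hγ : γ ∈ Set.Ioo (0 : ℝ) 1) {π : S → A → ℝ} (hπ : IsPolicy π) (r : S → A → ℝ)
    {q : S → A → S → ℝ} (hq : IsKernel q) (s : S) :
    Vval γ π r q s = rpi π r s + γ * (Pmat π q *ᵥ Vval γ π r q) s :=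
  tsum_discounted_mulVec_eq (Pmat_mem_rowStochastic hπ hq) hγ.1.le hγ.2 _ s

lemma exists_lt_of_ciInf_lt_ciSup {ι : Type*} [Nonempty ι] {f : ι → ℝ}
    (h : ⨅ i, f i < ⨆ i, f i) : ∃ i j, f j < f i := by
  obtain ⟨i, hi⟩ := exists_lt_of_lt_ciSup h
  obtain ⟨j, hj⟩ := exists_lt_of_ciInf_lt hi
  exact ⟨i, j, hj⟩

theorem stmt8_general {S A : Type*} [Fintype S] [DecidableEq S] [Fintype A]
    [Nonempty S]
    (γ : ℝ) (hγ : γ ∈ Set.Ioo (0 : ℝ) 1) (r : S → A → ℝ)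
    (π : S → A → ℝ) (hπ : IsPolicy π)
    (ρ : S → ℝ)
    -- Assumption 1
    (hA1a : ∑ s : S, ρ s * rpi π r s < (-γ / (1 - γ)) * (⨅ s : S, rpi π r s))
    (hA1b : (-γ / (1 - γ)) * (⨆ s : S, rpi π r s) < ∑ s : S, ρ s * rpi π r s) :
    ∃ c > 0, ∀ q : S → A → S → ℝ, IsKernel q →
      ∃ s s' : S, c ≤ Vval γ π r q s - Vval γ π r q s' := by
  have hk : 0 < γ / (1 - γ) := div_pos hγ.1 (sub_pos.2 hγ.2)
  have hgap : ⨅ s, rpi π r s < ⨆ s, rpi π r s := by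
    have h := hA1b.trans hA1a
    rwa [neg_div, neg_mul, neg_mul, neg_lt_neg_iff, mul_lt_mul_iff_right₀ hk] at h
  obtain ⟨s₁, s₀, hr⟩ := exists_lt_of_ciInf_lt_ciSup hgap
  refine ⟨(rpi π r s₁ - rpi π r s₀) / (1 + γ),
    div_pos (sub_pos.2 hr) (by linarith [hγ.1]), fun q hq => ?_⟩
  obtain ⟨sMax, hMax⟩ := Finite.exists_max (Vval γ π r q)
  obtain ⟨sMin, hMin⟩ := Finite.exists_min (Vval γ π r q)
  refine ⟨sMax, sMin, div_le_of_le_mul₀ (by linarith [hγ.1]) (by linarith [hMax sMin]) ?_⟩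
  rw [mul_comm]
  exact sub_le_one_add_mul_sub_of_bellman (Pmat_mem_rowStochastic hπ hq) hγ.1.le
    (Vval_eq_rpi_add hγ hπ r hq) hMax hMin s₁ s₀

/-- Under Assumption 1, there is a uniform `c > 0` such that for every kernel `q`
the value function spread `max_{s,s'} (V^π_q(s) − V^π_q(s'))` is at least `c`;
in particular `V^π_q` is never constant. -/
theorem stmt8 {S A : Type*} [Fintype S] [DecidableEq S] [Fintype A] [DecidableEq A]
    [Nonempty S] [Nonempty A]
    (γ : ℝ) (hγ : γ ∈ Set.Ioo (0 : ℝ) 1) (r : S → A → ℝ)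
    (π : S → A → ℝ) (hπ : IsPolicy π)
    (ρ : S → ℝ) (hρ0 : ∀ s, 0 ≤ ρ s) (hρ1 : ∑ s : S, ρ s = 1)
    -- Assumption 1
    (hρpos : ∀ s, 0 < ρ s)
    (hA1a : ∑ s : S, ρ s * rpi π r s < (-γ / (1 - γ)) * (⨅ s : S, rpi π r s))
    (hA1b : (-γ / (1 - γ)) * (⨆ s : S, rpi π r s) < ∑ s : S, ρ s * rpi π r s) :
    ∃ c > 0, ∀ q : S → A → S → ℝ, IsKernel q →
      ∃ s s' : S, c ≤ Vval γ π r q s - Vval γ π r q s' :=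
  stmt8_general γ hγ r π hπ ρ hA1a hA1b
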